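/- For all integers q ≥ 2 and n ≥ 1, the family 𝓔_q is n-cell implementable under scenario (◦∗) if and only if q ≤ 2^n, and likewise 𝓔_q is n-cell implementable under scenario (∗∗) if and only if q ≤ 2^n. -/

import Mathlib

/-- The alphabet 𝔹• = {0, 1, ∗, •}. -/
inductive BB : Type
  | zero
  | one
  | star
  | reject
deriving DecidableEq

instance instFintypeBB : Fintype BB :=
  ⟨{BB.zero, BB.one, BB.star, BB.reject}, fun x => by cases x <;> simp⟩

/-- The cell function T : 𝔹• × 𝔹• → 𝔹: T(u,ϑ) = 1 iff u = ∗, or ϑ = ∗,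
or u,ϑ ∈ 𝔹 with u = ϑ. -/
def Tcell : BB → BB → Bool
  | BB.star, _ => true
  | _, BB.star => true
  | BB.zero, BB.zero => true
  | BB.one, BB.one => true
  | _, _ => false

/-- The word-level function T(u,ϑ) = ⋀_{j<n} T(u_j, ϑ_j). -/
def Tword {n : ℕ} (u θ : Fin n → BB) : Bool :=
  decide (∀ j, Tcell (u j) (θ j) = true)

/-- The alphabet 𝔹 = {0,1} ⊆ 𝔹•. -/
def Bcirc : Set BB := {BB.zero, BB.one}

/-- The alphabet 𝔹∗ = {0,1,∗} ⊆ 𝔹•. -/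
def Bstar : Set BB := {BB.zero, BB.one, BB.star}

/-- The full alphabet 𝔹•. -/
def Bdot : Set BB := Set.univ

/-- A family Φ of functions {0,…,q−1} → 𝔹 is n-cell implementable under
scenario (A,B) if there are mappings u : {0,…,q−1} → A^n and ϑ : Φ → B^n
with f(x) = T(u(x), ϑ(f)) for all f ∈ Φ and x. -/
def Implementable (A B : Set BB) (n q : ℕ) (Φ : Set (Fin q → Bool)) : Prop :=
  ∃ u : Fin q → Fin n → BB, ∃ θ : (Fin q → Bool) → Fin n → BB,
    (∀ x j, u x j ∈ A) ∧ (∀ f ∈ Φ, ∀ j, θ f j ∈ B) ∧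
    (∀ f ∈ Φ, ∀ x, f x = Tword (u x) (θ f))

/-- The family 𝓔_q = { x ↦ [x = t] : t ∈ [q⟩ }. -/
def Eset (q : ℕ) : Set (Fin q → Bool) :=
  { f | ∃ t : Fin q, f = fun x => decide (x = t) }

/-- The family 𝓝_q = { x ↦ [x ≠ t] : t ∈ [q⟩ }. -/
def Nset (q : ℕ) : Set (Fin q → Bool) :=
  { f | ∃ t : Fin q, f = fun x => decide (x ≠ t) }

/-- The family 𝓖_q = { x ↦ [x ≥ t] : t ∈ [q⟩ }. -/
def Gset (q : ℕ) : Set (Fin q → Bool) :=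
  { f | ∃ t : Fin q, f = fun x => decide (t ≤ x) }

/-- The family 𝓛_q = { x ↦ [x ≤ t] : t ∈ [q⟩ }. -/
def Lset (q : ℕ) : Set (Fin q → Bool) :=
  { f | ∃ t : Fin q, f = fun x => decide (x ≤ t) }

/-!
Both scenarios are squeezed between injections `Fin q ↪ (Fin n → Bool)`. If `q ≤ 2 ^ n`, give
`x` and the function `[· = x]` the same binary word: `T` of two binary words tests their
equality. Conversely, from an implementation under `(∗∗)` read off the binary word of `t` from
`u t`, with each don't-care filled in by `ϑ [· = t]`. For `x ≠ t` some cell of `u x` rejects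
`ϑ [· = t]`; that cell holds a bit of `u x` different from the bit of `ϑ [· = t]`, which the cell
of `u t` accepts, so the words of `x` and `t` differ there.
-/

namespace BB

def ofBool : Bool → BB
  | false => BB.zero
  | true => BB.one

lemma ofBool_mem_Bcirc (b : Bool) : ofBool b ∈ Bcirc := by
  cases b <;> simp [ofBool, Bcirc]

lemma Tcell_ofBool (a b : Bool) : Tcell (ofBool a) (ofBool b) = decide (a = b) := by
  cases a <;> cases b <;> rfl

lemma ne_reject_of_mem_Bstar {a : BB} (ha : a ∈ Bstar) : a ≠ BB.reject := by
  rcases ha with rfl | rfl | rfl <;> decide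

def resolve (a b : BB) : Bool :=
  decide ((if a = BB.star then b else a) = BB.one)

lemma resolve_ne_of_Tcell {a b c : BB} (ha : a ≠ BB.reject) (hb : b ≠ BB.reject)
    (hc : c ≠ BB.reject) (hac : Tcell a c = false) (hbc : Tcell b c = true) (d : BB) :
    resolve a d ≠ resolve b c := by
  have key : ∀ a b c d : BB, a ≠ BB.reject → b ≠ BB.reject → c ≠ BB.reject →
      Tcell a c = false → Tcell b c = true → resolve a d ≠ resolve b c := by
    decide
  exact key a b c d ha hb hc hac hbc

end BB

lemma Tword_ofBool {n : ℕ} (v w : Fin n → Bool) :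
    Tword (BB.ofBool ∘ v) (BB.ofBool ∘ w) = decide (v = w) := by
  simp only [Tword, Function.comp_apply, BB.Tcell_ofBool, decide_eq_true_eq, funext_iff]

lemma Bcirc_subset_Bstar : Bcirc ⊆ Bstar := by
  intro a ha
  rcases ha with rfl | rfl <;> simp [Bstar]

lemma Implementable.mono {A A' B B' : Set BB} {n q : ℕ} {Φ : Set (Fin q → Bool)}
    (hA : A ⊆ A') (hB : B ⊆ B') (h : Implementable A B n q Φ) : Implementable A' B' n q Φ := by
  obtain ⟨u, θ, hu, hθ, himp⟩ := h
  exact ⟨u, θ, fun x j => hA (hu x j), fun f hf j => hB (hθ f hf j), himp⟩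

lemma implementable_range_iff {A B : Set BB} {n q : ℕ} {ι : Type*} (φ : ι → Fin q → Bool) :
    Implementable A B n q (Set.range φ) ↔
      ∃ u : Fin q → Fin n → BB, ∃ θ : ι → Fin n → BB,
        (∀ x j, u x j ∈ A) ∧ (∀ i j, θ i j ∈ B) ∧ ∀ i x, φ i x = Tword (u x) (θ i) := by
  classical
  constructor
  · rintro ⟨u, θ, hu, hθ, himp⟩
    exact ⟨u, θ ∘ φ, hu, fun i => hθ _ ⟨i, rfl⟩, fun i => himp _ ⟨i, rfl⟩⟩
  · rintro ⟨u, θ, hu, hθ, himp⟩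
    refine ⟨u, fun f j => if hf : f ∈ Set.range φ then θ hf.choose j else BB.star, hu, ?_, ?_⟩
    · rintro f hf j
      simpa only [dif_pos hf] using hθ _ j
    · rintro f hf x
      simpa only [dif_pos hf, hf.choose_spec] using himp hf.choose x

lemma Eset_eq_range (q : ℕ) : Eset q = Set.range fun (t x : Fin q) => decide (x = t) := by
  ext f
  simp only [Eset, Set.mem_ofPred_eq, Set.mem_range, eq_comm]

lemma implementable_Eset_of_injective {n q : ℕ} (e : Fin q → Fin n → Bool)
    (he : Function.Injective e) : Implementable Bcirc Bstar n q (Eset q) := by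
  rw [Eset_eq_range, implementable_range_iff]
  refine ⟨fun x => BB.ofBool ∘ e x, fun t => BB.ofBool ∘ e t, fun x j => BB.ofBool_mem_Bcirc _,
    fun t j => Bcirc_subset_Bstar (BB.ofBool_mem_Bcirc _), fun t x => ?_⟩
  simp only [Tword_ofBool, he.eq_iff]

lemma exists_injective_of_implementable_Eset {n q : ℕ}
    (h : Implementable Bstar Bstar n q (Eset q)) :
    ∃ e : Fin q → Fin n → Bool, Function.Injective e := by
  rw [Eset_eq_range, implementable_range_iff] at h
  obtain ⟨u, θ, hu, hθ, himp⟩ := h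
  refine ⟨fun t j => BB.resolve (u t j) (θ t j), fun x t hxt => by_contra fun hne => ?_⟩
  have hrej : Tword (u x) (θ t) = false := by simpa [hne] using (himp t x).symm
  have hacc : ∀ j, Tcell (u t j) (θ t j) = true := by simpa [Tword] using (himp t t).symm
  obtain ⟨j, hj⟩ : ∃ j, Tcell (u x j) (θ t j) = false := by simpa [Tword] using hrej
  exact BB.resolve_ne_of_Tcell (BB.ne_reject_of_mem_Bstar (hu x j))
    (BB.ne_reject_of_mem_Bstar (hu t j)) (BB.ne_reject_of_mem_Bstar (hθ t j)) hj
    (hacc j) (θ x j) (congrFun hxt j)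

theorem Eset_implementable_circStar_and_starStar_general (q n : ℕ) :
    (Implementable Bcirc Bstar n q (Eset q) ↔ q ≤ 2 ^ n) ∧
    (Implementable Bstar Bstar n q (Eset q) ↔ q ≤ 2 ^ n) := by
  have hcard : q ≤ 2 ^ n ↔ Nonempty (Fin q ↪ (Fin n → Bool)) := by
    rw [Function.Embedding.nonempty_iff_card_le]
    simp
  have hstar : Implementable Bstar Bstar n q (Eset q) → q ≤ 2 ^ n := fun h => by
    obtain ⟨e, he⟩ := exists_injective_of_implementable_Eset h
    exact hcard.2 ⟨⟨e, he⟩⟩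
  have hcirc : q ≤ 2 ^ n → Implementable Bcirc Bstar n q (Eset q) := fun h => by
    obtain ⟨e⟩ := hcard.1 h
    exact implementable_Eset_of_injective e e.injective
  have hmono :=
    Implementable.mono (n := n) (Φ := Eset q) Bcirc_subset_Bstar (Set.Subset.refl Bstar)
  exact ⟨⟨hstar ∘ hmono, hcirc⟩, ⟨hstar, hmono ∘ hcirc⟩⟩

theorem Eset_implementable_circStar_and_starStar (q n : ℕ) (hq : 2 ≤ q) (hn : 1 ≤ n) :
    (Implementable Bcirc Bstar n q (Eset q) ↔ q ≤ 2 ^ n) ∧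
    (Implementable Bstar Bstar n q (Eset q) ↔ q ≤ 2 ^ n) :=
  Eset_implementable_circStar_and_starStar_general q n
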